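/- arXiv:1409.1698 — 2 statements merged into one kernel-verified Lean document; each statement's English description precedes it below -/
import Mathlib

section
/- Let Γ be a Christoffel symbol field on M. Then the following are equivalent: (i) there exists a smooth one-form Υ on M such that the projective modification of Γ by Υ admits a smooth extension to Ū as a Christoffel symbol field; (ii) the tracefree part Ψ of Γ admits a smooth extension to Ū. (This is the chart version of: the projective class of a connection extends to the boundary if and only if the tracefree parts of its connection coefficients in suitable charts extend smoothly to the boundary.) -/
noncomputable section

/-- Kronecker delta on `Fin N`. -/
def kron {N : ℕ} (i j : Fin N) : ℝ := if i = j then 1 else 0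

/-- `i`-th coordinate partial derivative of a real-valued function on `ℝ^N`. -/
def pd {N : ℕ} (i : Fin N) (f : (Fin N → ℝ) → ℝ) (x : Fin N → ℝ) : ℝ :=
  fderiv ℝ f x (Pi.single i 1)

/-- Convention: `Γ x i j k` denotes the Christoffel symbol `Γ^k_{ij}` at `x`.
The trace `γ_i := Σ_k Γ^k_{ik}`. -/
def christTrace {N : ℕ} (Γ : (Fin N → ℝ) → Fin N → Fin N → Fin N → ℝ)
    (x : Fin N → ℝ) (i : Fin N) : ℝ :=
  ∑ k, Γ x i k k

/-- Tracefree part `Ψ^k_{ij} := Γ^k_{ij} − (1/(N+1))(γ_i δ^k_j + γ_j δ^k_i)`. -/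
def tracefree {N : ℕ} (Γ : (Fin N → ℝ) → Fin N → Fin N → Fin N → ℝ)
    (x : Fin N → ℝ) (i j k : Fin N) : ℝ :=
  Γ x i j k - (1 / ((N : ℝ) + 1)) *
    (christTrace Γ x i * kron j k + christTrace Γ x j * kron i k)

/-- Projective modification of `Γ` by the one-form `Υ`:
`Γ^k_{ij} + Υ_i δ^k_j + Υ_j δ^k_i`. -/
def pmod {N : ℕ} (Γ : (Fin N → ℝ) → Fin N → Fin N → Fin N → ℝ)
    (Υ : (Fin N → ℝ) → Fin N → ℝ) (x : Fin N → ℝ) (i j k : Fin N) : ℝ :=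
  Γ x i j k + Υ x i * kron j k + Υ x j * kron i k

/-- A Christoffel symbol field on a set `V`: smooth on `V` and symmetric in the
lower indices. -/
def IsChristoffelOn {N : ℕ} (V : Set (Fin N → ℝ))
    (Γ : (Fin N → ℝ) → Fin N → Fin N → Fin N → ℝ) : Prop :=
  ContDiffOn ℝ (⊤ : ℕ∞) Γ V ∧ ∀ x ∈ V, ∀ i j k, Γ x i j k = Γ x j i k

/-- `M = U ∩ {x_0 > 0}`. -/
def Mset {N : ℕ} [NeZero N] (U : Set (Fin N → ℝ)) : Set (Fin N → ℝ) :=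
  {x | x ∈ U ∧ 0 < x 0}

/-- `Ū = U ∩ {x_0 ≥ 0}`. -/
def Uclo {N : ℕ} [NeZero N] (U : Set (Fin N → ℝ)) : Set (Fin N → ℝ) :=
  {x | x ∈ U ∧ 0 ≤ x 0}

/-- The boundary `U ∩ {x_0 = 0}`. -/
def Bdry {N : ℕ} [NeZero N] (U : Set (Fin N → ℝ)) : Set (Fin N → ℝ) :=
  {x | x ∈ U ∧ x 0 = 0}

/-- `V` is a relatively open neighborhood of `x` in `A`. -/
def RelOpenNbhd {N : ℕ} (A V : Set (Fin N → ℝ)) (x : Fin N → ℝ) : Prop :=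
  x ∈ V ∧ ∃ O : Set (Fin N → ℝ), IsOpen O ∧ V = O ∩ A


lemma comp_contDiffOn {N : ℕ} {V : Set (Fin N → ℝ)}
    {Γ : (Fin N → ℝ) → Fin N → Fin N → Fin N → ℝ}
    (h : ContDiffOn ℝ (⊤ : ℕ∞) Γ V) (i j k : Fin N) :
    ContDiffOn ℝ (⊤ : ℕ∞) (fun x => Γ x i j k) V :=
  (contDiffOn_pi.mp ((contDiffOn_pi.mp ((contDiffOn_pi.mp h) i)) j)) k

lemma christTrace_contDiffOn {N : ℕ} {V : Set (Fin N → ℝ)}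
    {Γ : (Fin N → ℝ) → Fin N → Fin N → Fin N → ℝ}
    (h : ContDiffOn ℝ (⊤ : ℕ∞) Γ V) (i : Fin N) :
    ContDiffOn ℝ (⊤ : ℕ∞) (fun x => christTrace Γ x i) V := by
  unfold christTrace
  exact ContDiffOn.sum fun k _ => comp_contDiffOn h i k k

lemma tracefree_contDiffOn {N : ℕ} {V : Set (Fin N → ℝ)}
    {Γ : (Fin N → ℝ) → Fin N → Fin N → Fin N → ℝ}
    (h : ContDiffOn ℝ (⊤ : ℕ∞) Γ V) :
    ContDiffOn ℝ (⊤ : ℕ∞) (tracefree Γ) V := by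
  rw [contDiffOn_pi]; intro i
  rw [contDiffOn_pi]; intro j
  rw [contDiffOn_pi]; intro k
  unfold tracefree
  exact (comp_contDiffOn h i j k).sub (contDiffOn_const.mul
    (((christTrace_contDiffOn h i).mul contDiffOn_const).add
      ((christTrace_contDiffOn h j).mul contDiffOn_const)))

/-- the projective class of `Γ` (given on `M = U ∩ {x_0 > 0}`) extends smoothly
to `Ū = U ∩ {x_0 ≥ 0}` (i.e., some projective modification of `Γ` extends as a Christoffel
symbol field) if and only if the tracefree part of `Γ` admits a smooth extension to `Ū`. -/
theorem stmt2 {N : ℕ} [NeZero N] (hN : 2 ≤ N) (U : Set (Fin N → ℝ)) (hU : IsOpen U)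
    (hB : (Bdry U).Nonempty)
    (Γ : (Fin N → ℝ) → Fin N → Fin N → Fin N → ℝ)
    (hΓ : IsChristoffelOn (Mset U) Γ) :
    (∃ Υ : (Fin N → ℝ) → Fin N → ℝ, ContDiffOn ℝ (⊤ : ℕ∞) Υ (Mset U) ∧
        ∃ G : (Fin N → ℝ) → Fin N → Fin N → Fin N → ℝ, IsChristoffelOn (Uclo U) G ∧
          ∀ x ∈ Mset U, ∀ i j k, G x i j k = pmod Γ Υ x i j k) ↔
      (∃ P : (Fin N → ℝ) → Fin N → Fin N → Fin N → ℝ, ContDiffOn ℝ (⊤ : ℕ∞) P (Uclo U) ∧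
        ∀ x ∈ Mset U, ∀ i j k, P x i j k = tracefree Γ x i j k) := by
  have hNe : ((N : ℝ) + 1) ≠ 0 := by positivity
  constructor
  · rintro ⟨Υ, hΥ, G, ⟨hGsm, hGsym⟩, hGeq⟩
    refine ⟨tracefree G, tracefree_contDiffOn hGsm, ?_⟩
    intro x hx i j k
    have ht : ∀ i, christTrace G x i = christTrace Γ x i + ((N : ℝ) + 1) * Υ x i := by
      intro i
      simp only [christTrace, hGeq x hx, pmod, kron]
      rw [Finset.sum_add_distrib, Finset.sum_add_distrib]
      simp [Finset.sum_ite_eq, mul_comm]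
      ring
    simp only [tracefree, hGeq x hx, pmod, ht]
    field_simp
    ring
  · rintro ⟨P, hP, hPeq⟩
    refine ⟨fun x i => -(1 / ((N : ℝ) + 1)) * christTrace Γ x i, ?_,
      fun x i j k => (P x i j k + P x j i k) / 2, ⟨?_, ?_⟩, ?_⟩
    · rw [contDiffOn_pi]; intro i
      exact contDiffOn_const.mul (christTrace_contDiffOn hΓ.1 i)
    · rw [contDiffOn_pi]; intro i
      rw [contDiffOn_pi]; intro j
      rw [contDiffOn_pi]; intro k
      exact ((comp_contDiffOn hP i j k).add (comp_contDiffOn hP j i k)).div_const 2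
    · intro x hx i j k
      ring
    · intro x hx i j k
      have hs := hΓ.2 x hx j i k
      simp only [hPeq x hx, tracefree, pmod, hs]
      ring
end
end

section
/- Let g be a pseudo-Riemannian metric in coordinates on M with Levi-Civita Christoffel symbols Γ and tracefree part Ψ. Assume that Ψ admits a smooth extension to Ū and that τ := |det g|^{−1/(N+1)} admits a smooth extension to Ū whose value at some boundary point x ∈ U ∩ {x_0 = 0} is nonzero. Then there is a relatively open neighborhood V of x in Ū such that Γ itself admits a smooth extension to V. -/
/-!
By Jacobi's formula the trace of the Levi-Civita symbols is
`γ_i = ½ g^{kl} ∂_i g_{kl} = ½ ∂_i log |det g| = -((N + 1)/2) ∂_i log τ`.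
So on `M` the symbols `Γ` are the projective modification of their tracefree part `Ψ` by the
one-form `Υ = -½ dτ/τ`. Replacing `Ψ` and `τ` by their extensions makes this expression smooth
wherever the extension of `τ` is nonzero, which is a relatively open neighbourhood of `x` in `Ū`.
-/

noncomputable section

/-- A pseudo-Riemannian metric in coordinates on `V`, given with its inverse:
`g` is smooth on `V`, symmetric, and `ginv` is a (smooth) pointwise inverse of `g`. -/
def IsMetricOn {N : ℕ} (V : Set (Fin N → ℝ))
    (g ginv : (Fin N → ℝ) → Fin N → Fin N → ℝ) : Prop :=
  ContDiffOn ℝ (⊤ : ℕ∞) g V ∧ ContDiffOn ℝ (⊤ : ℕ∞) ginv V ∧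
    (∀ x ∈ V, ∀ i j, g x i j = g x j i) ∧
    (∀ x ∈ V, ∀ i j, (∑ l, g x i l * ginv x l j) = kron i j)

/-- Levi-Civita Christoffel symbols of `g`:
`Γ^k_{ij} = (1/2) Σ_l g^{kl}(∂_i g_{jl} + ∂_j g_{il} − ∂_l g_{ij})`.
Convention: `LC g ginv x i j k = Γ^k_{ij}(x)`. -/
def LC {N : ℕ} (g ginv : (Fin N → ℝ) → Fin N → Fin N → ℝ)
    (x : Fin N → ℝ) (i j k : Fin N) : ℝ :=
  (1 / 2 : ℝ) * ∑ l, ginv x k l *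
    (pd i (fun y => g y j l) x + pd j (fun y => g y i l) x - pd l (fun y => g y i j) x)

/-- Ricci curvature
`Ric_{ij} = Σ_k ∂_k Γ^k_{ij} − Σ_k ∂_j Γ^k_{ki} + Σ_{k,l}(Γ^k_{kl} Γ^l_{ij} − Γ^k_{jl} Γ^l_{ki})`. -/
def Ricci {N : ℕ} (g ginv : (Fin N → ℝ) → Fin N → Fin N → ℝ)
    (x : Fin N → ℝ) (i j : Fin N) : ℝ :=
  (∑ k, pd k (fun y => LC g ginv y i j k) x)
    - (∑ k, pd j (fun y => LC g ginv y k i k) x)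
    + ∑ k, ∑ l,
        (LC g ginv x k l k * LC g ginv x i j l - LC g ginv x j l k * LC g ginv x k i l)

/-- Scalar curvature `S = Σ_{i,j} g^{ij} Ric_{ij}`. -/
def scal {N : ℕ} (g ginv : (Fin N → ℝ) → Fin N → Fin N → ℝ) (x : Fin N → ℝ) : ℝ :=
  ∑ i, ∑ j, ginv x i j * Ricci g ginv x i j

/-- `|det g(x)|`. -/
def absDet {N : ℕ} (g : (Fin N → ℝ) → Fin N → Fin N → ℝ) (x : Fin N → ℝ) : ℝ :=
  |(Matrix.of (g x)).det|

/-- `τ(x) := |det g(x)|^{−1/(N+1)}`. -/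
def tau {N : ℕ} (g : (Fin N → ℝ) → Fin N → Fin N → ℝ) (x : Fin N → ℝ) : ℝ :=
  absDet g x ^ (-(1 : ℝ) / ((N : ℝ) + 1))

open Matrix

section Jacobi

variable {n : Type*} [Fintype n] [DecidableEq n]

def continuousMultilinearDet (R : Type*) [CommRing R] [TopologicalSpace R] [IsTopologicalRing R] :
    ContinuousMultilinearMap R (fun _ : n => n → R) R :=
  { (detRowAlternating : (n → R) [⋀^n]→ₗ[R] R).toMultilinearMap with
    cont := continuous_id.matrix_det }

theorem Matrix.det_updateRow_eq_sum_adjugate {R : Type*} [CommRing R] (A : Matrix n n R)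
    (i : n) (b : n → R) : (A.updateRow i b).det = ∑ l, A.adjugate l i * b l := by
  rw [← cramer_transpose_apply, cramer_eq_adjugate_mulVec, ← adjugate_transpose]
  rfl

/-- Jacobi's formula `d (det A) = tr (adj A · dA)`, for a matrix given by its entries. -/
theorem HasFDerivAt.det_of_entries {𝕜 E : Type*} [NontriviallyNormedField 𝕜]
    [NormedAddCommGroup E] [NormedSpace 𝕜 E] {F : E → n → n → 𝕜} {F' : n → n → E →L[𝕜] 𝕜} {y : E}
    (hF : ∀ k l, HasFDerivAt (fun z => F z k l) (F' k l) y) :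
    HasFDerivAt (fun z => (of (F z)).det) (∑ k, ∑ l, (of (F y)).adjugate l k • F' k l) y := by
  have hrow k : HasFDerivAt (F · k) (ContinuousLinearMap.pi (F' k)) y :=
    hasFDerivAt_pi.2 (hF k)
  refine (HasFDerivAt.multilinear_comp (f := continuousMultilinearDet 𝕜) hrow).congr_fderiv ?_
  ext v
  simp only [FunLike.coe_sum, Finset.sum_apply, ContinuousLinearMap.coe_comp, Function.comp_apply,
    ContinuousMultilinearMap.toContinuousLinearMap_apply, FunLike.coe_smul, Pi.smul_apply,
    smul_eq_mul]
  exact Finset.sum_congr rfl fun k _ => det_updateRow_eq_sum_adjugate _ k _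

end Jacobi

theorem pd_abs_rpow {N : ℕ} {f : (Fin N → ℝ) → ℝ} {y : Fin N → ℝ}
    (hf : DifferentiableAt ℝ f y) (hy : f y ≠ 0) (p : ℝ) (i : Fin N) :
    pd i (fun z => |f z| ^ p) y = p * |f y| ^ p * (pd i f y / f y) := by
  have habs : |f y| ≠ 0 := abs_ne_zero.2 hy
  rw [pd, ((hf.hasFDerivAt.abs hy).rpow_const (Or.inl habs)).fderiv, pd]
  simp only [FunLike.coe_smul, Pi.smul_apply, smul_eq_mul, Real.rpow_sub_one habs]
  rcases hy.lt_or_gt with hneg | hpos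
  · rw [sign_neg hneg, SignType.coe_neg_one, abs_of_neg hneg]
    field_simp
  · rw [sign_pos hpos, SignType.coe_one, abs_of_pos hpos]
    field_simp

namespace IsMetricOn

variable {N : ℕ} {s : Set (Fin N → ℝ)} {g ginv : (Fin N → ℝ) → Fin N → Fin N → ℝ}
  {y : Fin N → ℝ}

theorem mul_inv_eq_one (h : IsMetricOn s g ginv) (hy : y ∈ s) :
    of (g y) * of (ginv y) = 1 := by
  ext i j
  simpa [mul_apply, one_apply, kron] using h.2.2.2 y hy i j

theorem inv_symm (h : IsMetricOn s g ginv) (hy : y ∈ s) (k l : Fin N) :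
    ginv y k l = ginv y l k := by
  have hgT : (of (g y))ᵀ = of (g y) := by
    ext i j
    exact h.2.2.1 y hy j i
  have hinvT : of (g y) * (of (ginv y))ᵀ = 1 := by
    rw [← hgT, ← transpose_mul, mul_eq_one_comm.1 (h.mul_inv_eq_one hy), transpose_one]
  have := (inv_eq_right_inv hinvT).symm.trans (inv_eq_right_inv (h.mul_inv_eq_one hy))
  exact congrFun (congrFun this l) k

theorem det_ne_zero (h : IsMetricOn s g ginv) (hy : y ∈ s) : (of (g y)).det ≠ 0 :=
  left_ne_zero_of_mul_eq_one (by rw [← det_mul, h.mul_inv_eq_one hy, det_one])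

theorem adjugate_eq (h : IsMetricOn s g ginv) (hy : y ∈ s) :
    (of (g y)).adjugate = (of (g y)).det • of (ginv y) := by
  rw [← inv_eq_right_inv (h.mul_inv_eq_one hy), inv_def, smul_smul, Ring.inverse_eq_inv',
    mul_inv_cancel₀ (h.det_ne_zero hy), one_smul]

theorem hasFDerivAt_entry (hs : IsOpen s) (h : IsMetricOn s g ginv) (hy : y ∈ s)
    (k l : Fin N) :
    HasFDerivAt (fun z => g z k l) (fderiv ℝ (fun z => g z k l) y) y :=
  ((contDiffOn_pi.1 (contDiffOn_pi.1 h.1 k) l).differentiableOn (by simp)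
    |>.differentiableAt (hs.mem_nhds hy)).hasFDerivAt

theorem pd_det (hs : IsOpen s) (h : IsMetricOn s g ginv) (hy : y ∈ s) (i : Fin N) :
    pd i (fun z => (of (g z)).det) y
      = (of (g y)).det * ∑ k, ∑ l, ginv y k l * pd i (fun z => g z k l) y := by
  rw [pd, (HasFDerivAt.det_of_entries (h.hasFDerivAt_entry hs hy)).fderiv, h.adjugate_eq hy]
  simp only [FunLike.coe_sum, Finset.sum_apply, FunLike.coe_smul, Pi.smul_apply, smul_eq_mul,
    Finset.mul_sum, pd, Matrix.smul_apply, of_apply]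
  refine Finset.sum_congr rfl fun k _ => Finset.sum_congr rfl fun l _ => ?_
  rw [h.inv_symm hy l k, mul_assoc]

theorem christTrace_LC (h : IsMetricOn s g ginv) (hy : y ∈ s) (i : Fin N) :
    christTrace (LC g ginv) y i
      = (1 / 2 : ℝ) * ∑ k, ∑ l, ginv y k l * pd i (fun z => g z k l) y := by
  have hswap : ∑ k, ∑ l, ginv y k l * pd l (fun z => g z i k) y
      = ∑ k, ∑ l, ginv y k l * pd k (fun z => g z i l) y := by
    rw [Finset.sum_comm]
    simp only [h.inv_symm hy]
  simp only [christTrace, LC, ← Finset.mul_sum, mul_add, mul_sub, Finset.sum_add_distrib,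
    Finset.sum_sub_distrib, hswap]
  ring

theorem christTrace_LC_div_eq_pd_tau (hs : IsOpen s) (h : IsMetricOn s g ginv) (hy : y ∈ s)
    (i : Fin N) :
    christTrace (LC g ginv) y i / (N + 1) = -(1 / 2) * (pd i (tau g) y / tau g y) := by
  have hdet := h.det_ne_zero hy
  have hdiff := (HasFDerivAt.det_of_entries (h.hasFDerivAt_entry hs hy)).differentiableAt
  have htau : tau g = fun z => |(of (g z)).det| ^ (-1 / ((N : ℝ) + 1)) := rfl
  have hpow : |(of (g y)).det| ^ (-1 / ((N : ℝ) + 1)) ≠ 0 :=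
    (Real.rpow_pos_of_pos (abs_pos.2 hdet) _).ne'
  rw [christTrace_LC h hy, htau, pd_abs_rpow hdiff hdet, h.pd_det hs hy]
  field_simp

end IsMetricOn

section ProjectiveModification

variable {N : ℕ}

theorem pmod_tracefree (Γ : (Fin N → ℝ) → Fin N → Fin N → Fin N → ℝ) (x : Fin N → ℝ)
    (i j k : Fin N) :
    pmod (tracefree Γ) (fun x i => christTrace Γ x i / (N + 1)) x i j k = Γ x i j k := by
  simp only [pmod, tracefree]
  ring

theorem ContDiffOn.pmod {V : Set (Fin N → ℝ)} {Γ : (Fin N → ℝ) → Fin N → Fin N → Fin N → ℝ}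
    {Υ : (Fin N → ℝ) → Fin N → ℝ} (hΓ : ContDiffOn ℝ (⊤ : ℕ∞) Γ V)
    (hΥ : ContDiffOn ℝ (⊤ : ℕ∞) Υ V) : ContDiffOn ℝ (⊤ : ℕ∞) (pmod Γ Υ) V := by
  have hΥi i : ContDiffOn ℝ (⊤ : ℕ∞) (Υ · i) V := contDiffOn_pi.1 hΥ i
  refine contDiffOn_pi.2 fun i => contDiffOn_pi.2 fun j => contDiffOn_pi.2 fun k => ?_
  exact ((contDiffOn_pi.1 (contDiffOn_pi.1 (contDiffOn_pi.1 hΓ i) j) k).add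
    ((hΥi i).mul contDiffOn_const)).add ((hΥi j).mul contDiffOn_const)

end ProjectiveModification

section HalfSpace

variable {N : ℕ} [NeZero N] {U : Set (Fin N → ℝ)}

theorem isOpen_Mset (hU : IsOpen U) : IsOpen (Mset U) :=
  hU.inter (isOpen_lt continuous_const (continuous_apply 0))

theorem Mset_subset_Uclo : Mset U ⊆ Uclo U := fun _ hz => ⟨hz.1, hz.2.le⟩

theorem uniqueDiffOn_Uclo (hU : IsOpen U) : UniqueDiffOn ℝ (Uclo U) := by
  have hH : UniqueDiffOn ℝ {z : Fin N → ℝ | 0 ≤ z 0} :=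
    uniqueDiffOn_convex (convex_halfSpace_ge (LinearMap.proj 0).isLinear 0)
      ⟨fun _ => 1, (isOpen_lt continuous_const (continuous_apply 0)).subset_interior_iff.2
        (fun _ hz => le_of_lt hz) (zero_lt_one' ℝ)⟩
  have hUclo : Uclo U = {z : Fin N → ℝ | 0 ≤ z 0} ∩ U := Set.ext fun _ => and_comm
  rw [hUclo]
  exact hH.inter hU

theorem fderivWithin_Uclo_eq_fderiv (hU : IsOpen U) {T f : (Fin N → ℝ) → ℝ}
    (hTf : Set.EqOn T f (Mset U)) {y : Fin N → ℝ} (hy : y ∈ Mset U) :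
    fderivWithin ℝ T (Uclo U) y = fderiv ℝ f y := by
  have hMy : Mset U ∈ nhds y := (isOpen_Mset hU).mem_nhds hy
  rw [fderivWithin_of_mem_nhds (Filter.mem_of_superset hMy Mset_subset_Uclo)]
  exact Filter.EventuallyEq.fderiv_eq (Filter.eventuallyEq_of_mem hMy hTf)

end HalfSpace

theorem stmt7_general {N : ℕ} [NeZero N] (U : Set (Fin N → ℝ)) (hU : IsOpen U)
    (g ginv : (Fin N → ℝ) → Fin N → Fin N → ℝ) (hg : IsMetricOn (Mset U) g ginv)
    (hΨ : ∃ P : (Fin N → ℝ) → Fin N → Fin N → Fin N → ℝ,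
      ContDiffOn ℝ (⊤ : ℕ∞) P (Uclo U) ∧
        ∀ x ∈ Mset U, ∀ i j k, P x i j k = tracefree (LC g ginv) x i j k)
    (x : Fin N → ℝ) (hx : x ∈ Bdry U)
    (hτ : ∃ T : (Fin N → ℝ) → ℝ, ContDiffOn ℝ (⊤ : ℕ∞) T (Uclo U) ∧
      (∀ y ∈ Mset U, T y = tau g y) ∧ T x ≠ 0) :
    ∃ V : Set (Fin N → ℝ), RelOpenNbhd (Uclo U) V x ∧
      ∃ G : (Fin N → ℝ) → Fin N → Fin N → Fin N → ℝ, ContDiffOn ℝ (⊤ : ℕ∞) G V ∧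
        ∀ y ∈ V ∩ Mset U, ∀ i j k, G y i j k = LC g ginv y i j k := by
  obtain ⟨P, hP, hPΨ⟩ := hΨ
  obtain ⟨T, hT, hTτ, hTx⟩ := hτ
  obtain ⟨O, hO, hOV⟩ := continuousOn_iff'.1 hT.continuousOn {0}ᶜ isOpen_compl_singleton
  set V := T ⁻¹' {0}ᶜ ∩ Uclo U
  let Υ : (Fin N → ℝ) → Fin N → ℝ := fun y i =>
    -(1 / 2) * (fderivWithin ℝ T (Uclo U) y (Pi.single i 1) / T y)
  have hΥ : ContDiffOn ℝ (⊤ : ℕ∞) Υ V := by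
    have hdT : ContDiffOn ℝ (⊤ : ℕ∞) (fderivWithin ℝ T (Uclo U)) (Uclo U) :=
      hT.fderivWithin (uniqueDiffOn_Uclo hU) (by exact_mod_cast le_top)
    refine contDiffOn_pi.2 fun i => contDiffOn_const.mul ?_
    exact ((hdT.clm_apply contDiffOn_const).mono Set.inter_subset_right).div
      (hT.mono Set.inter_subset_right) fun y hy => hy.1
  have hΥM y (hy : y ∈ Mset U) i : Υ y i = christTrace (LC g ginv) y i / (N + 1) := by
    rw [hg.christTrace_LC_div_eq_pd_tau (isOpen_Mset hU) hy]
    simp only [Υ, fderivWithin_Uclo_eq_fderiv hU hTτ hy, hTτ y hy, pd]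
  refine ⟨V, ⟨⟨hTx, hx.1, hx.2.ge⟩, O, hO, hOV⟩, pmod P Υ,
    (hP.mono Set.inter_subset_right).pmod hΥ, ?_⟩
  rintro y ⟨-, hyM⟩ i j k
  rw [← pmod_tracefree (LC g ginv) y i j k]
  simp only [pmod, hPΨ y hyM, hΥM y hyM]

/-- if the tracefree part of the Levi-Civita symbols extends smoothly to `Ū`
and `τ = |det g|^{−1/(N+1)}` extends smoothly to `Ū` with nonzero value at a boundary
point `x`, then the Levi-Civita symbols themselves extend smoothly to some relatively
open neighborhood of `x` in `Ū`. -/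
theorem stmt7 {N : ℕ} [NeZero N] (hN : 2 ≤ N) (U : Set (Fin N → ℝ)) (hU : IsOpen U)
    (hB : (Bdry U).Nonempty)
    (g ginv : (Fin N → ℝ) → Fin N → Fin N → ℝ) (hg : IsMetricOn (Mset U) g ginv)
    (hΨ : ∃ P : (Fin N → ℝ) → Fin N → Fin N → Fin N → ℝ,
      ContDiffOn ℝ (⊤ : ℕ∞) P (Uclo U) ∧
        ∀ x ∈ Mset U, ∀ i j k, P x i j k = tracefree (LC g ginv) x i j k)
    (x : Fin N → ℝ) (hx : x ∈ Bdry U)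
    (hτ : ∃ T : (Fin N → ℝ) → ℝ, ContDiffOn ℝ (⊤ : ℕ∞) T (Uclo U) ∧
      (∀ y ∈ Mset U, T y = tau g y) ∧ T x ≠ 0) :
    ∃ V : Set (Fin N → ℝ), RelOpenNbhd (Uclo U) V x ∧
      ∃ G : (Fin N → ℝ) → Fin N → Fin N → Fin N → ℝ, ContDiffOn ℝ (⊤ : ℕ∞) G V ∧
        ∀ y ∈ V ∩ Mset U, ∀ i j k, G y i j k = LC g ginv y i j k :=
  stmt7_general U hU g ginv hg hΨ x hx hτ
end
end
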